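/- Let q be a real number with q > 0 and q ≠ 1, let k ≥ 1 and n be natural numbers, and let x_1, …, x_k be real numbers. Then Σ C_q(n; r_1,…,r_k) · ∏_{j=1}^{k} [ x_j^{r_j} · ∏_{i=1}^{n − s_j} (1 − x_j q^{i−1}) ] = 1, where the sum is over all tuples (r_1,…,r_k) of natural numbers with r_1 + ⋯ + r_k ≤ n, and s_j = r_1 + ⋯ + r_j. -/

import Mathlib

noncomputable def qNum (q : ℝ) (m : ℤ) : ℝ := (1 - q ^ m) / (1 - q)

noncomputable def qFactorial (q : ℝ) (n : ℕ) : ℝ :=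
  ∏ i ∈ Finset.range n, qNum q ((i : ℤ) + 1)

noncomputable def qFacOrd (q : ℝ) (x : ℤ) (r : ℕ) : ℝ :=
  ∏ i ∈ Finset.range r, qNum q (x - (i : ℤ))

noncomputable def qMultinomial (q : ℝ) (x : ℤ) {k : ℕ} (r : Fin k → ℕ) : ℝ :=
  qFacOrd q x (∑ j, r j) / ∏ j, qFactorial q (r j)

/-
Splitting off the first coordinate factors the weight of `(r₁, …, r_k)` as the q-binomial weight
`[n, r₁]_q x₁^{r₁} (x₁; q)_{n - r₁}` times the weight of `(r₂, …, r_k)` for `n - r₁` trials, so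
induction on `k` reduces the identity to the q-binomial case `∑_t [n, t]_q x^t (x; q)_{n-t} = 1`.
Writing `f_n(x)` for that sum, the Pascal rule `[n+1, t+1]_q = [n, t]_q + q^{t+1} [n, t+1]_q` and
`(x; q)_{m+1} = (1 - x) (qx; q)_m` give `f_{n+1}(x) = x f_n(x) + (1 - x) f_n(qx)`, which settles it
by induction on `n`. Tuples with `r₁ + ⋯ + r_k > n` carry the factor `[0]_q = 0`, so they may be
added to or dropped from the sum freely.
-/

open Finset

noncomputable def qBinom (q : ℝ) (x : ℤ) (r : ℕ) : ℝ := qFacOrd q x r / qFactorial q r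

noncomputable def qPochhammer (q x : ℝ) (m : ℕ) : ℝ := ∏ i ∈ range m, (1 - x * q ^ i)

noncomputable def qMultinomialWeight (q : ℝ) (n : ℕ) {k : ℕ} (x : Fin k → ℝ) (r : Fin k → ℕ) : ℝ :=
  qMultinomial q n r *
    ∏ j, x j ^ r j * qPochhammer q (x j) (n - ∑ i ∈ univ.filter (fun i => i ≤ j), r i)

section

variable {q : ℝ}

@[simp]
lemma qNum_zero : qNum q 0 = 0 := by simp [qNum]

lemma qNum_add (hq : q ≠ 0) (a b : ℤ) : qNum q (a + b) = qNum q a + q ^ a * qNum q b := by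
  simp only [qNum, zpow_add₀ hq]
  ring

lemma qNum_natCast_ne_zero (hq : 0 ≤ q) (hq1 : q ≠ 1) {m : ℕ} (hm : m ≠ 0) :
    qNum q m ≠ 0 := by
  rw [qNum, zpow_natCast]
  refine div_ne_zero (sub_ne_zero.mpr fun h => hq1 ?_) (sub_ne_zero.mpr hq1.symm)
  exact (pow_eq_one_iff_of_nonneg hq hm).mp h.symm

lemma qFactorial_ne_zero (hq : 0 ≤ q) (hq1 : q ≠ 1) (n : ℕ) : qFactorial q n ≠ 0 :=
  prod_ne_zero_iff.mpr fun i _ => mod_cast qNum_natCast_ne_zero hq hq1 i.succ_ne_zero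

lemma qFactorial_succ (n : ℕ) : qFactorial q (n + 1) = qFactorial q n * qNum q (n + 1) :=
  prod_range_succ _ _

lemma qFacOrd_succ (x : ℤ) (r : ℕ) : qFacOrd q x (r + 1) = qFacOrd q x r * qNum q (x - r) :=
  prod_range_succ _ _

lemma qFacOrd_succ' (x : ℤ) (r : ℕ) : qFacOrd q x (r + 1) = qNum q x * qFacOrd q (x - 1) r := by
  rw [qFacOrd, prod_range_succ', mul_comm, qFacOrd]
  congr 1
  · simp
  · refine prod_congr rfl fun i _ => ?_
    push_cast
    ring_nf

lemma qFacOrd_add (x : ℤ) (a b : ℕ) :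
    qFacOrd q x (a + b) = qFacOrd q x a * qFacOrd q (x - a) b := by
  rw [qFacOrd, prod_range_add, qFacOrd, qFacOrd]
  congr 1
  refine prod_congr rfl fun i _ => ?_
  push_cast
  ring_nf

lemma qFacOrd_eq_zero {n r : ℕ} (h : n < r) : qFacOrd q n r = 0 :=
  prod_eq_zero (mem_range.mpr h) (by simp)

@[simp]
lemma qBinom_zero_right (x : ℤ) : qBinom q x 0 = 1 := by simp [qBinom, qFacOrd, qFactorial]

lemma qBinom_eq_zero {n r : ℕ} (h : n < r) : qBinom q n r = 0 := by
  rw [qBinom, qFacOrd_eq_zero h, zero_div]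

lemma qBinom_succ_succ (hq : 0 < q) (hq1 : q ≠ 1) (x : ℤ) (t : ℕ) :
    qBinom q (x + 1) (t + 1) = qBinom q x t + q ^ (t + 1) * qBinom q x (t + 1) := by
  have hpascal : qNum q (x + 1) = qNum q (t + 1) + q ^ (t + 1) * qNum q (x - t) := by
    have h := qNum_add hq.ne' ((t : ℤ) + 1) (x - t)
    rw [show (t : ℤ) + 1 + (x - t) = x + 1 by ring] at h
    exact_mod_cast h
  have hfac := qFactorial_ne_zero hq.le hq1 t
  have hnum : qNum q (t + 1) ≠ 0 := mod_cast qNum_natCast_ne_zero hq.le hq1 t.succ_ne_zero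
  rw [qBinom, qBinom, qBinom, qFacOrd_succ', add_sub_cancel_right, qFacOrd_succ, qFactorial_succ,
    hpascal]
  field_simp

@[simp]
lemma qPochhammer_zero (x : ℝ) : qPochhammer q x 0 = 1 := prod_range_zero _

lemma qPochhammer_succ (x : ℝ) (m : ℕ) :
    qPochhammer q x (m + 1) = (1 - x) * qPochhammer q (q * x) m := by
  simp only [qPochhammer, prod_range_succ', pow_succ]
  ring_nf

lemma sum_qBinom_mul_qPochhammer (hq : 0 < q) (hq1 : q ≠ 1) (n : ℕ) (x : ℝ) :
    ∑ t ∈ range (n + 1), qBinom q n t * (x ^ t * qPochhammer q x (n - t)) = 1 := by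
  induction n generalizing x with
  | zero => simp
  | succ n ih =>
    have hshift : (1 - x) *
          ∑ t ∈ range (n + 1), qBinom q n t * ((q * x) ^ t * qPochhammer q (q * x) (n - t))
        = qPochhammer q x (n + 1) + ∑ s ∈ range (n + 1),
            q ^ (s + 1) * qBinom q n (s + 1) * (x ^ (s + 1) * qPochhammer q x (n - s)) := by
      calc _ = ∑ t ∈ range (n + 2),
              qBinom q n t * (q ^ t * x ^ t * qPochhammer q x (n + 1 - t)) := by
            rw [sum_range_succ _ (n + 1), qBinom_eq_zero (lt_add_one n), zero_mul, add_zero,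
              mul_sum]
            refine sum_congr rfl fun t ht => ?_
            rw [Nat.sub_add_comm (Nat.le_of_lt_succ (mem_range.mp ht)), qPochhammer_succ]
            ring
        _ = _ := by
            rw [sum_range_succ', add_comm]
            simp only [qBinom_zero_right, pow_zero, one_mul, Nat.sub_zero, Nat.add_sub_add_right]
            congr 1
            exact sum_congr rfl fun s _ => by ring
    calc _ = ∑ s ∈ range (n + 1), (qBinom q n s + q ^ (s + 1) * qBinom q n (s + 1)) *
              (x ^ (s + 1) * qPochhammer q x (n - s)) + qPochhammer q x (n + 1) := by
          rw [sum_range_succ']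
          push_cast
          simp only [qBinom_succ_succ hq hq1, qBinom_zero_right]
          ring
      _ = x * ∑ t ∈ range (n + 1), qBinom q n t * (x ^ t * qPochhammer q x (n - t)) +
            (1 - x) * ∑ t ∈ range (n + 1),
              qBinom q n t * ((q * x) ^ t * qPochhammer q (q * x) (n - t)) := by
          rw [hshift, mul_sum, ← add_assoc, add_right_comm, ← sum_add_distrib]
          congr 1
          exact sum_congr rfl fun s _ => by ring
      _ = 1 := by rw [ih, ih]; ring

lemma qMultinomial_eq_zero {n k : ℕ} {r : Fin k → ℕ} (h : n < ∑ j, r j) :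
    qMultinomial q n r = 0 := by
  rw [qMultinomial, qFacOrd_eq_zero h, zero_div]

lemma qMultinomial_cons {k : ℕ} (x : ℤ) (a : ℕ) (v : Fin k → ℕ) :
    qMultinomial q x (Fin.cons a v) = qBinom q x a * qMultinomial q (x - a) v := by
  rw [qMultinomial, qBinom, qMultinomial, Fin.sum_cons, qFacOrd_add, Fin.prod_univ_succ,
    div_mul_div_comm]
  simp

lemma sum_filter_le_zero_cons {M : Type*} [AddCommMonoid M] {k : ℕ} (a : M) (v : Fin k → M) :
    ∑ i ∈ univ.filter (fun i => i ≤ (0 : Fin (k + 1))), Fin.cons a v i = a := by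
  rw [sum_filter, Fin.sum_univ_succ]
  simp [Fin.succ_ne_zero]

lemma sum_filter_le_succ_cons {M : Type*} [AddCommMonoid M] {k : ℕ} (a : M) (v : Fin k → M)
    (j : Fin k) :
    ∑ i ∈ univ.filter (fun i => i ≤ j.succ), Fin.cons a v i
      = a + ∑ i ∈ univ.filter (fun i => i ≤ j), v i := by
  rw [sum_filter, Fin.sum_univ_succ, sum_filter]
  simp

lemma qMultinomialWeight_cons {n k : ℕ} (x : Fin (k + 1) → ℝ) (a : ℕ) (v : Fin k → ℕ) :
    qMultinomialWeight q n x (Fin.cons a v) =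
      qBinom q n a * (x 0 ^ a * qPochhammer q (x 0) (n - a)) *
        qMultinomialWeight q (n - a) (Fin.tail x) v := by
  by_cases ha : a ≤ n
  · have hcast : (n : ℤ) - a = ((n - a : ℕ) : ℤ) := by omega
    simp only [qMultinomialWeight, qMultinomial_cons, hcast, Fin.prod_univ_succ, Fin.cons_zero,
      Fin.cons_succ, sum_filter_le_zero_cons, sum_filter_le_succ_cons, Nat.sub_sub, Fin.tail]
    ring
  · simp [qMultinomialWeight, qMultinomial_cons, qBinom_eq_zero (not_le.mp ha)]

lemma sum_range_qBinom_mul_qPochhammer_of_le (hq : 0 < q) (hq1 : q ≠ 1) {n N : ℕ} (h : n ≤ N)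
    (x : ℝ) : ∑ t ∈ range (N + 1), qBinom q n t * (x ^ t * qPochhammer q x (n - t)) = 1 := by
  rw [← sum_subset (range_subset_range.mpr (Nat.succ_le_succ h)),
    sum_qBinom_mul_qPochhammer hq hq1]
  intro t _ ht
  rw [qBinom_eq_zero (by simpa using ht), zero_mul]

lemma sum_qMultinomialWeight (hq : 0 < q) (hq1 : q ≠ 1) (k : ℕ) {n N : ℕ} (h : n ≤ N)
    (x : Fin k → ℝ) : ∑ r : Fin k → Fin (N + 1), qMultinomialWeight q n x (fun j => r j) = 1 := by
  induction k generalizing n with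
  | zero => simp [qMultinomialWeight, qMultinomial, qFacOrd, qFactorial]
  | succ k ih =>
    rw [← (Fin.consEquiv fun _ => Fin (N + 1)).sum_comp, Fintype.sum_prod_type]
    calc _ = ∑ a : Fin (N + 1), qBinom q n a * (x 0 ^ (a : ℕ) * qPochhammer q (x 0) (n - a)) *
              ∑ b : Fin k → Fin (N + 1),
                qMultinomialWeight q (n - a) (Fin.tail x) (fun j => b j) := by
          refine sum_congr rfl fun a _ => ?_
          rw [mul_sum]
          refine sum_congr rfl fun b _ => ?_
          rw [← qMultinomialWeight_cons]
          congr 1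
          exact Fin.comp_cons Fin.val (a : Fin (N + 1)) b
      _ = ∑ t ∈ range (N + 1), qBinom q n t * (x 0 ^ t * qPochhammer q (x 0) (n - t)) := by
          simp only [ih (n.sub_le _ |>.trans h), mul_one]
          exact Fin.sum_univ_eq_sum_range
            (fun t => qBinom q n t * (x 0 ^ t * qPochhammer q (x 0) (n - t))) _
      _ = 1 := sum_range_qBinom_mul_qPochhammer_of_le hq hq1 h (x 0)

end

theorem qMultinomial_sum_one'_general (q : ℝ) (hq : 0 < q) (hq1 : q ≠ 1)
    (k n : ℕ) (x : Fin k → ℝ) :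
    ∑ r ∈ Finset.univ.filter (fun r : Fin k → Fin (n + 1) => ∑ j, (r j : ℕ) ≤ n),
      qMultinomial q (n : ℤ) (fun j => (r j : ℕ)) *
        ∏ j : Fin k,
          x j ^ (r j : ℕ) *
            ∏ i ∈ Finset.range
                (n - ∑ i' ∈ Finset.univ.filter (fun i' => i' ≤ j), (r i' : ℕ)),
              (1 - x j * q ^ i) = 1 := by
  rw [sum_filter_of_ne fun r _ hr =>
    not_lt.mp fun h => hr (by rw [qMultinomial_eq_zero h, zero_mul])]
  exact sum_qMultinomialWeight hq hq1 k le_rfl x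

/-- Second identity of Corollary 2.1 (q-case):
    Σ_{r, Σr_j ≤ n} C_q(n; r) ∏_j x_j^(r_j) ∏_{i=1}^{n−s_j} (1 − x_j q^(i−1)) = 1. -/
theorem qMultinomial_sum_one' (q : ℝ) (hq : 0 < q) (hq1 : q ≠ 1)
    (k n : ℕ) (hk : 1 ≤ k) (x : Fin k → ℝ) :
    ∑ r ∈ Finset.univ.filter (fun r : Fin k → Fin (n + 1) => ∑ j, (r j : ℕ) ≤ n),
      qMultinomial q (n : ℤ) (fun j => (r j : ℕ)) *
        ∏ j : Fin k,
          x j ^ (r j : ℕ) *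
            ∏ i ∈ Finset.range
                (n - ∑ i' ∈ Finset.univ.filter (fun i' => i' ≤ j), (r i' : ℕ)),
              (1 - x j * q ^ i) = 1 :=
  qMultinomial_sum_one'_general q hq hq1 k n x
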